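/- arXiv:2604.04682 — 3 statements merged into one kernel-verified Lean document; each statement's English description precedes it below -/
import Mathlib

section
/- Let Γ be a group, a ∈ Γ an element of infinite order, b ∈ Γ and m > 0 with b a^m b⁻¹ = a^{-m}. If b² has infinite order, then the subgroup generated by a^m and b² is isomorphic to ℤ². -/
/-!
Conjugation by `b` inverts `x = a ^ m`, so conjugation by `b ^ 2` fixes it and `x`, `b ^ 2` commute;
hence `(i, j) ↦ x ^ i * (b ^ 2) ^ j` is a homomorphism from `ℤ²` onto the subgroup they generate.
It is injective: conjugating `x ^ i * (b ^ 2) ^ j = 1` by `b` gives `x ^ (-i) * (b ^ 2) ^ j = 1`,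
so `x ^ i = x ^ (-i)`, forcing `i = 0` and then `j = 0` because both elements have infinite order.
-/

section

variable {G : Type*} [Group G]

theorem commute_pow_two_of_conj_eq_inv {x b : G} (h : b * x * b⁻¹ = x⁻¹) : Commute x (b ^ 2) := by
  have hb : MulAut.conj b x = x⁻¹ := h
  have hfix : MulAut.conj (b ^ 2) x = x := by
    rw [map_pow, pow_two, MulAut.mul_apply, hb, map_inv, hb, inv_inv]
  exact (mul_inv_eq_iff_eq_mul.mp hfix).symm

namespace Commute

variable {x y : G}

def zpowersProdHom (h : Commute x y) : Multiplicative (ℤ × ℤ) →* G :=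
  MonoidHom.mk' (fun p => x ^ p.toAdd.1 * y ^ p.toAdd.2) fun p q => by
    simp only [toAdd_mul, Prod.fst_add, Prod.snd_add, zpow_add]
    exact ((h.zpow_zpow _ _).symm.mul_mul_mul_comm _ _).symm

@[simp]
theorem zpowersProdHom_apply (h : Commute x y) (p : Multiplicative (ℤ × ℤ)) :
    h.zpowersProdHom p = x ^ p.toAdd.1 * y ^ p.toAdd.2 :=
  rfl

theorem range_zpowersProdHom (h : Commute x y) :
    h.zpowersProdHom.range = Subgroup.closure {x, y} := by
  have hx : x ∈ Subgroup.closure {x, y} := Subgroup.subset_closure (by simp)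
  have hy : y ∈ Subgroup.closure {x, y} := Subgroup.subset_closure (by simp)
  apply le_antisymm
  · rintro _ ⟨p, rfl⟩
    exact mul_mem (zpow_mem hx _) (zpow_mem hy _)
  · rw [Subgroup.closure_le]
    rintro g (rfl | rfl)
    · exact ⟨Multiplicative.ofAdd (1, 0), by simp⟩
    · exact ⟨Multiplicative.ofAdd (0, 1), by simp⟩

theorem zpowersProdHom_injective_of_conj_eq_inv (h : Commute x y) {b : G}
    (hx : ¬IsOfFinOrder x) (hy : ¬IsOfFinOrder y) (hbx : b * x * b⁻¹ = x⁻¹) (hby : Commute b y) :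
    Function.Injective h.zpowersProdHom := by
  rw [injective_iff_map_eq_one]
  rintro ⟨i, j⟩ hij
  replace hij : x ^ i * y ^ j = 1 := hij
  have hconj : x ^ (-i) * y ^ j = 1 := by
    have := congrArg (MulAut.conj b) hij
    rwa [map_mul, map_zpow, map_zpow, MulAut.conj_apply, MulAut.conj_apply, hbx, hby.eq,
      mul_inv_cancel_right, inv_zpow', map_one] at this
  have hi : i = 0 := by
    have : x ^ i = x ^ (-i) := mul_right_cancel (hij.trans hconj.symm)
    linarith [injective_zpow_iff_not_isOfFinOrder.mpr hx this]
  subst hi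
  have hj : y ^ j = y ^ (0 : ℤ) := by simpa using hij
  rw [injective_zpow_iff_not_isOfFinOrder.mpr hy hj]
  rfl

end Commute

end

/-- If `a` has infinite order, `b * a^m * b⁻¹ = a^{-m}` with `m > 0`, and `b²`
has infinite order, then the subgroup generated by `a^m` and `b²` is isomorphic to `ℤ²`. -/
theorem stmt2 {Γ : Type*} [Group Γ] (a b : Γ) (m : ℕ) (hm : 0 < m)
    (ha : ¬ IsOfFinOrder a)
    (h : b * a ^ m * b⁻¹ = (a ^ m)⁻¹)
    (hb2 : ¬ IsOfFinOrder (b ^ 2)) :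
    Nonempty ((Subgroup.closure {a ^ m, b ^ 2} : Subgroup Γ) ≃* Multiplicative (ℤ × ℤ)) := by
  have hx : ¬IsOfFinOrder (a ^ m) := by
    rw [isOfFinOrder_pow]
    exact fun h' => h'.elim ha hm.ne'
  have hc : Commute (a ^ m) (b ^ 2) := commute_pow_two_of_conj_eq_inv h
  have hinj := hc.zpowersProdHom_injective_of_conj_eq_inv hx hb2 h (Commute.self_pow b 2)
  exact ⟨((MonoidHom.ofInjective hinj).trans (MulEquiv.subgroupCongr hc.range_zpowersProdHom)).symm⟩
end

section
/- Let Γ be a group and A a symmetric subset of Γ containing every element of finite order. Let a ∈ Γ be achiral (i.e. b a^m b⁻¹ = a^{-m} for some b ∈ Γ, m > 0). If every power of b² that arises has finite order (i.e. b² has finite order), then the stable word norm of a with respect to A is zero. -/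
/-!
If `b` inverts `x = aᵏ` by conjugation, then `x b x⁻¹ b = x² b²` and `b²` commutes with `x`, so
with `d` the order of `b²` we get `(x b x⁻¹ b)ᵈ = x²ᵈ`. Both `x b x⁻¹` and `b` have finite order,
hence lie in `A`, and taking `k = m n` exhibits `(a^{2md})ⁿ` as a word of length `2d` in `A`,
uniformly in `n`.
-/

section WordNorm

variable {Γ : Type*} [Group Γ]

noncomputable def wordNorm (A : Set Γ) (g : Γ) : ℕ :=
  sInf {n | ∃ l : List Γ, (∀ x ∈ l, x ∈ A) ∧ l.prod = g ∧ l.length = n}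

theorem wordNorm_prod_le_length {A : Set Γ} {l : List Γ} (hl : ∀ x ∈ l, x ∈ A) :
    wordNorm A l.prod ≤ l.length :=
  Nat.sInf_le ⟨l, hl, rfl, rfl⟩

theorem wordNorm_mul_pow_le {A : Set Γ} {x y : Γ} (hx : x ∈ A) (hy : y ∈ A) (d : ℕ) :
    wordNorm A ((x * y) ^ d) ≤ 2 * d := by
  have hword : ∀ z ∈ (List.replicate d [x, y]).flatten, z ∈ A := by
    intro z hz
    obtain ⟨_, hl, hz⟩ := List.mem_flatten.1 hz
    rw [List.eq_of_mem_replicate hl] at hz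
    rcases List.mem_pair.1 hz with rfl | rfl
    exacts [hx, hy]
  simpa [List.prod_flatten, Nat.mul_comm] using wordNorm_prod_le_length hword

end WordNorm

section Achiral

variable {Γ : Type*} [Group Γ] {b x : Γ}

theorem conj_pow_eq_inv_pow (h : b * x * b⁻¹ = x⁻¹) (n : ℕ) :
    b * x ^ n * b⁻¹ = (x ^ n)⁻¹ := by
  rw [← conj_pow, h, inv_pow]

theorem conj_inv_eq_of_conj_eq_inv (h : b * x * b⁻¹ = x⁻¹) : b * x⁻¹ * b⁻¹ = x := by
  rw [← conj_inv, h, inv_inv]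

theorem commute_sq_of_conj_eq_inv (h : b * x * b⁻¹ = x⁻¹) : Commute x (b ^ 2) := by
  show x * b ^ 2 = b ^ 2 * x
  calc x * b ^ 2 = (b * x⁻¹ * b⁻¹) * b ^ 2 := by rw [conj_inv_eq_of_conj_eq_inv h]
    _ = b * (b * x * b⁻¹) * b := by rw [h]; group
    _ = b ^ 2 * x := by rw [sq]; group

theorem mul_conj_inv_mul_eq (h : b * x * b⁻¹ = x⁻¹) : x * b * x⁻¹ * b = x ^ 2 * b ^ 2 := by
  calc x * b * x⁻¹ * b = x * (b * x⁻¹ * b⁻¹) * b ^ 2 := by group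
    _ = x ^ 2 * b ^ 2 := by rw [conj_inv_eq_of_conj_eq_inv h, ← sq]

theorem mul_conj_inv_mul_pow_orderOf (h : b * x * b⁻¹ = x⁻¹) :
    (x * b * x⁻¹ * b) ^ orderOf (b ^ 2) = x ^ (2 * orderOf (b ^ 2)) := by
  rw [mul_conj_inv_mul_eq h, (commute_sq_of_conj_eq_inv h).pow_left 2 |>.mul_pow,
    pow_orderOf_eq_one, mul_one, ← pow_mul]

end Achiral

theorem stmt4_general {Γ : Type*} [Group Γ] (A : Set Γ)
    (hfin : ∀ x : Γ, IsOfFinOrder x → x ∈ A)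
    (a b : Γ) (m : ℕ) (hm : 0 < m)
    (h : b * a ^ m * b⁻¹ = (a ^ m)⁻¹)
    (hb2 : IsOfFinOrder (b ^ 2))
    (ν : Γ → ℕ)
    (hν : ∀ g, ν g = sInf {n | ∃ l : List Γ,
      (∀ x ∈ l, x ∈ A) ∧ l.prod = g ∧ l.length = n}) :
    ∃ q : ℕ, 0 < q ∧ a ^ q ∈ Subgroup.closure A ∧
      Filter.Tendsto (fun n : ℕ => (ν ((a ^ q) ^ n) : ℝ) / n) Filter.atTop (nhds 0) := by
  set d := orderOf (b ^ 2) with hd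
  have hb : IsOfFinOrder b := hb2.of_pow two_ne_zero
  have hbA : b ∈ A := hfin b hb
  have hconjA (y : Γ) : y * b * y⁻¹ ∈ A := hfin _ ((isConj_iff.2 ⟨y, rfl⟩).isOfFinOrder hb)
  have hword (n : ℕ) : (a ^ (2 * m * d)) ^ n = (a ^ (m * n) * b * (a ^ (m * n))⁻¹ * b) ^ d := by
    rw [mul_conj_inv_mul_pow_orderOf (by rw [pow_mul, conj_pow_eq_inv_pow h]), ← hd,
      ← pow_mul, ← pow_mul]
    ring_nf
  refine ⟨2 * m * d, Nat.mul_pos (Nat.mul_pos two_pos hm) hb2.orderOf_pos, ?_, ?_⟩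
  · rw [← pow_one (a ^ _), hword]
    exact Subgroup.pow_mem _ (Subgroup.mul_mem _ (Subgroup.subset_closure (hconjA _))
      (Subgroup.subset_closure hbA)) d
  · have hbound (n : ℕ) : ν ((a ^ (2 * m * d)) ^ n) ≤ 2 * d := by
      rw [hν, hword]
      exact wordNorm_mul_pow_le (hconjA _) hbA d
    refine squeeze_zero (fun n => by positivity) (fun n => ?_)
      (tendsto_const_div_atTop_nhds_zero_nat ((2 * d : ℕ) : ℝ))
    gcongr
    exact_mod_cast hbound n

/-- Let `A` be a symmetric subset of `Γ` containing every element of finite order,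
and let `a` be achiral via `b` with `b²` of finite order. Then the stable word norm
of `a` with respect to `A` is zero: some positive power `a^q` lies in `⟨A⟩` and the
stable word norm of `a^q` vanishes. -/
theorem stmt4 {Γ : Type*} [Group Γ] (A : Set Γ)
    (hsymm : ∀ x ∈ A, x⁻¹ ∈ A)
    (hfin : ∀ x : Γ, IsOfFinOrder x → x ∈ A)
    (a b : Γ) (m : ℕ) (hm : 0 < m)
    (h : b * a ^ m * b⁻¹ = (a ^ m)⁻¹)
    (hb2 : IsOfFinOrder (b ^ 2))
    (ν : Γ → ℕ)
    (hν : ∀ g, ν g = sInf {n | ∃ l : List Γ,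
      (∀ x ∈ l, x ∈ A) ∧ l.prod = g ∧ l.length = n}) :
    ∃ q : ℕ, 0 < q ∧ a ^ q ∈ Subgroup.closure A ∧
      Filter.Tendsto (fun n : ℕ => (ν ((a ^ q) ^ n) : ℝ) / n) Filter.atTop (nhds 0) :=
  stmt4_general A hfin a b m hm h hb2 ν hν
end

section
/- Let Γ be a group, A a symmetric subset containing all elements of finite order, and a ∈ Γ an achiral element. Then either some power of a lies in a subgroup of Γ isomorphic to ℤ², or the stable word norm ν̄_A(a) equals zero. -/
/-- For a symmetric subset `A` of `Γ` containing all elements of finite order and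
an achiral element `a`, either some power of `a` lies in a subgroup isomorphic to `ℤ²`,
or the stable word norm of `a` with respect to `A` is zero. -/
theorem stmt5 {Γ : Type*} [Group Γ] (A : Set Γ)
    (hsymm : ∀ x ∈ A, x⁻¹ ∈ A)
    (hfin : ∀ x : Γ, IsOfFinOrder x → x ∈ A)
    (a : Γ) (hach : ∃ (b : Γ) (m : ℕ), 0 < m ∧ b * a ^ m * b⁻¹ = (a ^ m)⁻¹)
    (ν : Γ → ℕ)
    (hν : ∀ g, ν g = sInf {n | ∃ l : List Γ,
      (∀ x ∈ l, x ∈ A) ∧ l.prod = g ∧ l.length = n}) :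
    (∃ (k : ℕ) (H : Subgroup Γ), 0 < k ∧ a ^ k ∈ H ∧
        Nonempty (H ≃* Multiplicative (ℤ × ℤ))) ∨
    (∃ q : ℕ, 0 < q ∧ a ^ q ∈ Subgroup.closure A ∧
      Filter.Tendsto (fun n : ℕ => (ν ((a ^ q) ^ n) : ℝ) / n) Filter.atTop (nhds 0)) := by
  obtain ⟨b, m, hm, hb⟩ := hach
  by_cases hfa : IsOfFinOrder a
  · -- a has finite order: take q = orderOf a, then a^q = 1 and ν(1) = 0
    right
    refine ⟨orderOf a, hfa.orderOf_pos, ?_, ?_⟩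
    · rw [pow_orderOf_eq_one]; exact Subgroup.one_mem _
    · have h1 : ν 1 = 0 := by
        rw [hν]
        exact Nat.sInf_eq_zero.mpr (Or.inl ⟨[], by simp⟩)
      have heq : (fun n : ℕ => (ν ((a ^ orderOf a) ^ n) : ℝ) / n) = fun _ => (0 : ℝ) := by
        funext n
        rw [pow_orderOf_eq_one, one_pow, h1]
        simp
      rw [heq]
      exact tendsto_const_nhds
  · by_cases hfb : IsOfFinOrder (b * b)
    · -- b² has finite order, so b is torsion and a^{mn} = b⁻¹ (b a^{mn}) with both factors torsion
      right
      obtain ⟨k, hk, hk1⟩ := isOfFinOrder_iff_pow_eq_one.mp hfb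
      have hbfin : IsOfFinOrder b :=
        isOfFinOrder_iff_pow_eq_one.mpr ⟨2 * k, by omega, by rw [pow_mul, pow_two]; exact hk1⟩
      have hconj : ∀ n : ℕ, b * (a ^ m) ^ n * b⁻¹ = ((a ^ m) ^ n)⁻¹ := by
        intro n
        calc b * (a ^ m) ^ n * b⁻¹ = (b * a ^ m * b⁻¹) ^ n := (conj_pow).symm
        _ = ((a ^ m)⁻¹) ^ n := by rw [hb]
        _ = ((a ^ m) ^ n)⁻¹ := by rw [inv_pow]
      have key : ∀ n : ℕ, IsOfFinOrder (b * (a ^ m) ^ n) := by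
        intro n
        have hshift : b * (a ^ m) ^ n = ((a ^ m) ^ n)⁻¹ * b :=
          mul_inv_eq_iff_eq_mul.mp (hconj n)
        have hsq : (b * (a ^ m) ^ n) ^ 2 =
            ((a ^ m) ^ n)⁻¹ * (b * b) * (((a ^ m) ^ n)⁻¹)⁻¹ := by
          rw [pow_two]
          nth_rewrite 1 [hshift]
          group
        refine isOfFinOrder_iff_pow_eq_one.mpr ⟨2 * k, by omega, ?_⟩
        rw [pow_mul, hsq, conj_pow, hk1, mul_one]
        simp
      have hbinvA : b⁻¹ ∈ A := hfin _ hbfin.inv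
      refine ⟨m, hm, ?_, ?_⟩
      · have h1 : a ^ m = b⁻¹ * (b * (a ^ m) ^ 1) := by group
        rw [h1]
        exact mul_mem (Subgroup.subset_closure hbinvA)
          (Subgroup.subset_closure (hfin _ (key 1)))
      · have hbound : ∀ n : ℕ, (ν ((a ^ m) ^ n) : ℝ) ≤ 2 := by
          intro n
          have h2 : ν ((a ^ m) ^ n) ≤ 2 := by
            rw [hν]
            apply Nat.sInf_le
            refine ⟨[b⁻¹, b * (a ^ m) ^ n], ?_, ?_, rfl⟩
            · intro x hx
              rcases List.mem_pair.mp hx with h | h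
              · rw [h]; exact hbinvA
              · rw [h]; exact hfin _ (key n)
            · simp [inv_mul_cancel_left]
          exact_mod_cast h2
        apply squeeze_zero (g := fun n : ℕ => (2 : ℝ) / n)
        · intro n
          exact div_nonneg (Nat.cast_nonneg _) (Nat.cast_nonneg _)
        · intro n
          gcongr
          exact hbound n
        · exact tendsto_const_div_atTop_nhds_zero_nat 2
    · -- both a and b² have infinite order: ⟨a^m, b²⟩ ≅ ℤ²
      left
      set x := a ^ m with hx
      set y := b * b with hy
      have hconjx : b * x * b⁻¹ = x⁻¹ := hb
      have hconjzx : ∀ i : ℤ, b * x ^ i * b⁻¹ = x ^ (-i) := by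
        intro i
        rw [← conj_zpow, hconjx, inv_zpow, ← zpow_neg]
      have hxy : Commute x y := by
        have h1 : y * x * y⁻¹ = x := by
          have e : b * x⁻¹ * b⁻¹ = x := by
            have h2 : b * x⁻¹ * b⁻¹ = (b * x * b⁻¹)⁻¹ := by group
            rw [h2, hconjx, inv_inv]
          rw [hy]
          calc b * b * x * (b * b)⁻¹ = b * (b * x * b⁻¹) * b⁻¹ := by group
          _ = b * x⁻¹ * b⁻¹ := by rw [hconjx]
          _ = x := e
        have := h1
        rw [mul_inv_eq_iff_eq_mul] at this
        exact this.symm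
      have hcomm : ∀ (i j : ℤ), x ^ i * y ^ j = y ^ j * x ^ i := by
        intro i j
        exact (hxy.zpow_zpow i j).eq
      -- the homomorphism ℤ² → Γ
      let ψ : Multiplicative (ℤ × ℤ) →* Γ := MonoidHom.mk'
        (fun p => x ^ (p.toAdd.1) * y ^ (p.toAdd.2))
        (by
          intro p q
          show x ^ (p.toAdd.1 + q.toAdd.1) * y ^ (p.toAdd.2 + q.toAdd.2) = _
          rw [zpow_add, zpow_add]
          calc x ^ p.toAdd.1 * x ^ q.toAdd.1 * (y ^ p.toAdd.2 * y ^ q.toAdd.2)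
              = x ^ p.toAdd.1 * (x ^ q.toAdd.1 * y ^ p.toAdd.2) * y ^ q.toAdd.2 := by group
            _ = x ^ p.toAdd.1 * (y ^ p.toAdd.2 * x ^ q.toAdd.1) * y ^ q.toAdd.2 := by
                rw [hcomm]
            _ = x ^ p.toAdd.1 * y ^ p.toAdd.2 * (x ^ q.toAdd.1 * y ^ q.toAdd.2) := by group)
      have horda : orderOf a = 0 := orderOf_eq_zero hfa
      have hordy : orderOf y = 0 := orderOf_eq_zero hfb
      have hxpow : ∀ i : ℤ, x ^ i = 1 → i = 0 := by
        intro i hi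
        have : ((orderOf a : ℤ)) ∣ (m : ℤ) * i := by
          rw [orderOf_dvd_iff_zpow_eq_one]
          rw [hx] at hi
          rw [← zpow_natCast a m, ← zpow_mul] at hi
          exact hi
        rw [horda] at this
        have := zero_dvd_iff.mp this
        have hm' : (m : ℤ) ≠ 0 := by exact_mod_cast hm.ne'
        exact (mul_eq_zero.mp this).resolve_left hm'
      have hypow : ∀ j : ℤ, y ^ j = 1 → j = 0 := by
        intro j hj
        have : ((orderOf y : ℤ)) ∣ j := orderOf_dvd_iff_zpow_eq_one.mpr hj
        rw [hordy] at this
        exact_mod_cast zero_dvd_iff.mp this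
      have hinj : Function.Injective ψ := by
        rw [injective_iff_map_eq_one]
        intro p hp
        have hp' : x ^ (p.toAdd.1) * y ^ (p.toAdd.2) = 1 := hp
        -- conjugate by b
        have hcy : b * y * b⁻¹ = y := by rw [hy]; group
        have hczy : b * y ^ p.toAdd.2 * b⁻¹ = y ^ p.toAdd.2 := by
          rw [← conj_zpow, hcy]
        have hp2 : x ^ (-p.toAdd.1) * y ^ (p.toAdd.2) = 1 := by
          have : b * (x ^ (p.toAdd.1) * y ^ (p.toAdd.2)) * b⁻¹ = 1 := by
            rw [hp']; group
          calc x ^ (-p.toAdd.1) * y ^ (p.toAdd.2)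
              = (b * x ^ (p.toAdd.1) * b⁻¹) * (b * y ^ (p.toAdd.2) * b⁻¹) := by
                rw [hconjzx, hczy]
            _ = b * (x ^ (p.toAdd.1) * y ^ (p.toAdd.2)) * b⁻¹ := by group
            _ = 1 := this
        have hxx : x ^ (p.toAdd.1) = x ^ (-p.toAdd.1) := by
          have e1 : x ^ (p.toAdd.1) = (y ^ (p.toAdd.2))⁻¹ := by
            rw [eq_inv_iff_mul_eq_one]; exact hp'
          have e2 : x ^ (-p.toAdd.1) = (y ^ (p.toAdd.2))⁻¹ := by
            rw [eq_inv_iff_mul_eq_one]; exact hp2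
          rw [e1, e2]
        have h2i : x ^ (2 * p.toAdd.1) = 1 := by
          rw [two_mul, zpow_add]
          nth_rewrite 2 [hxx]
          rw [← zpow_add]
          simp
        have hi0 : p.toAdd.1 = 0 := by
          have := hxpow _ h2i
          omega
        have hj0 : p.toAdd.2 = 0 := by
          apply hypow
          rw [hi0] at hp'
          simpa using hp'
        have : p.toAdd = (0, 0) := Prod.ext hi0 hj0
        exact Multiplicative.toAdd.injective this
      refine ⟨m, ψ.range, hm, ?_, ⟨(MonoidHom.ofInjective hinj).symm⟩⟩
      refine ⟨Multiplicative.ofAdd (1, 0), ?_⟩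
      show x ^ (1 : ℤ) * y ^ (0 : ℤ) = a ^ m
      rw [zpow_one, zpow_zero, mul_one]
end
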